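/- arXiv:2310.03398 — 5 statements merged into one kernel-verified Lean document; each statement's English description precedes it below -/
import Mathlib

section
/- With C̄(T) as the optimal barycenter structure for the plan T, the GW energy satisfies the closed form E(C, C̄(T), T) = ∑_{ij} C_{ij}² h_i h_j − ∑_{k,l : h̄_k h̄_l > 0} (T_{:,k}ᵀ C T_{:,l})² / (h̄_k h̄_l), where T_{:,k} denotes the k-th column of T and h̄ = Tᵀ1_N. -/
open Matrix BigOperators

noncomputable def GWEnergy {N n : ℕ} (C : Matrix (Fin N) (Fin N) ℝ)
    (D : Matrix (Fin n) (Fin n) ℝ) (T : Matrix (Fin N) (Fin n) ℝ) : ℝ :=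
  ∑ i, ∑ j, ∑ k, ∑ l, (C i j - D k l) ^ 2 * T i k * T j l

noncomputable def colSum {N n : ℕ} (T : Matrix (Fin N) (Fin n) ℝ) (k : Fin n) : ℝ :=
  ∑ i, T i k

noncomputable def CbarOf {N n : ℕ} (C : Matrix (Fin N) (Fin N) ℝ)
    (T : Matrix (Fin N) (Fin n) ℝ) : Matrix (Fin n) (Fin n) ℝ :=
  Matrix.of fun k l =>
    if 0 < colSum T k * colSum T l then
      (∑ i, ∑ j, T i k * C i j * T j l) / (colSum T k * colSum T l)
    else 0

private lemma sum4_comm {N n : ℕ} (f : Fin N → Fin N → Fin n → Fin n → ℝ) :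
    (∑ i, ∑ j, ∑ k, ∑ l, f i j k l) = ∑ k, ∑ l, ∑ i, ∑ j, f i j k l := by
  calc (∑ i, ∑ j, ∑ k, ∑ l, f i j k l)
      = ∑ i, ∑ k, ∑ j, ∑ l, f i j k l :=
        Finset.sum_congr rfl fun i _ => Finset.sum_comm
    _ = ∑ k, ∑ i, ∑ j, ∑ l, f i j k l := Finset.sum_comm
    _ = ∑ k, ∑ i, ∑ l, ∑ j, f i j k l :=
        Finset.sum_congr rfl fun k _ => Finset.sum_congr rfl fun i _ => Finset.sum_comm
    _ = ∑ k, ∑ l, ∑ i, ∑ j, f i j k l :=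
        Finset.sum_congr rfl fun k _ => Finset.sum_comm

/-- Closed form of the GW energy at the optimal barycenter structure:
`E(C, C̄(T), T) = ∑ C_{ij}² h_i h_j − ∑_{k,l : h̄_k h̄_l > 0} (T_{:,k}ᵀ C T_{:,l})²/(h̄_k h̄_l)`. -/
theorem GWEnergy_CbarOf_closedForm {N n : ℕ}
    (C : Matrix (Fin N) (Fin N) ℝ) (h : Fin N → ℝ)
    (hpos : ∀ i, 0 < h i) (hsum : ∑ i, h i = 1)
    (T : Matrix (Fin N) (Fin n) ℝ)
    (hTpos : ∀ i j, 0 ≤ T i j) (hTrow : ∀ i, ∑ j, T i j = h i) :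
    GWEnergy C (CbarOf C T) T =
      (∑ i, ∑ j, (C i j) ^ 2 * h i * h j) -
        ∑ k, ∑ l,
          if 0 < colSum T k * colSum T l then
            (∑ i, ∑ j, T i k * C i j * T j l) ^ 2 / (colSum T k * colSum T l)
          else 0 := by
  have key : ∀ k l, (∑ i, ∑ j, (C i j - CbarOf C T k l) ^ 2 * T i k * T j l)
      = (∑ i, ∑ j, (C i j) ^ 2 * T i k * T j l)
        - (if 0 < colSum T k * colSum T l then
            (∑ i, ∑ j, T i k * C i j * T j l) ^ 2 / (colSum T k * colSum T l) else 0) := by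
    intro k l
    have hPTT : (∑ i, ∑ j, T i k * T j l) = colSum T k * colSum T l := by
      rw [colSum, colSum, Finset.sum_mul_sum]
    have expand : (∑ i, ∑ j, (C i j - CbarOf C T k l) ^ 2 * T i k * T j l)
        = (∑ i, ∑ j, (C i j) ^ 2 * T i k * T j l)
          - 2 * CbarOf C T k l * (∑ i, ∑ j, T i k * C i j * T j l)
          + (CbarOf C T k l) ^ 2 * (colSum T k * colSum T l) := by
      rw [← hPTT]
      simp only [Finset.mul_sum, ← Finset.sum_sub_distrib, ← Finset.sum_add_distrib]
      apply Finset.sum_congr rfl; intro i _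
      apply Finset.sum_congr rfl; intro j _
      ring
    rw [expand, CbarOf]
    by_cases hc : 0 < colSum T k * colSum T l
    · simp only [Matrix.of_apply, if_pos hc]
      field_simp
      ring
    · simp only [Matrix.of_apply, if_neg hc]
      ring
  have swap : GWEnergy C (CbarOf C T) T
      = ∑ k, ∑ l, ∑ i, ∑ j, (C i j - CbarOf C T k l) ^ 2 * T i k * T j l :=
    sum4_comm _
  rw [swap]
  simp_rw [key, Finset.sum_sub_distrib]
  congr 1
  rw [← sum4_comm]
  apply Finset.sum_congr rfl; intro i _
  apply Finset.sum_congr rfl; intro j _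
  have h1 : ∀ k, (∑ l, C i j ^ 2 * T i k * T j l) = C i j ^ 2 * T i k * h j := by
    intro k; rw [← Finset.mul_sum, hTrow]
  simp_rw [h1]
  have h2 : ∀ k, C i j ^ 2 * T i k * h j = (C i j ^ 2 * h j) * T i k := by
    intro k; ring
  simp_rw [h2, ← Finset.mul_sum, hTrow]
  ring
end

section
/- The function T ↦ E(C, C̄(T), T) = ∑_{ij} C_{ij}² h_i h_j − ∑_{k,l : h̄_k(T) h̄_l(T) > 0} (T_{:,k}ᵀ C T_{:,l})²/(h̄_k(T) h̄_l(T)) is continuous on the compact polytope U_n(h). -/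
open Matrix BigOperators

/-- The function `T ↦ E(C, C̄(T), T)`, given in closed form by
`∑ C_{ij}² h_i h_j − ∑_{k,l : h̄_k h̄_l > 0} (T_{:,k}ᵀ C T_{:,l})²/(h̄_k h̄_l)`,
is continuous on the compact polytope `U_n(h)`. -/
theorem GWEnergy_reduced_continuousOn {N n : ℕ}
    (C : Matrix (Fin N) (Fin N) ℝ) (h : Fin N → ℝ)
    (hpos : ∀ i, 0 < h i) (hsum : ∑ i, h i = 1) :
    ContinuousOn
      (fun T : Matrix (Fin N) (Fin n) ℝ =>
        (∑ i, ∑ j, (C i j) ^ 2 * h i * h j) -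
          ∑ k, ∑ l,
            if 0 < colSum T k * colSum T l then
              (∑ i, ∑ j, T i k * C i j * T j l) ^ 2 / (colSum T k * colSum T l)
            else 0)
      {T : Matrix (Fin N) (Fin n) ℝ |
        (∀ i j, 0 ≤ T i j) ∧ ∀ i, ∑ j, T i j = h i} := by
  set S := {T : Matrix (Fin N) (Fin n) ℝ | (∀ i j, 0 ≤ T i j) ∧ ∀ i, ∑ j, T i j = h i}
    with hS
  have hcol : ∀ k : Fin n, Continuous (fun T : Matrix (Fin N) (Fin n) ℝ => colSum T k) := by
    intro k
    exact continuous_finset_sum _ fun i _ => continuous_apply_apply i k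
  apply ContinuousOn.sub continuousOn_const
  apply continuousOn_finset_sum
  intro k _
  apply continuousOn_finset_sum
  intro l _
  set c := fun T : Matrix (Fin N) (Fin n) ℝ => ∑ i, ∑ j, T i k * C i j * T j l with hcdef
  have hc : Continuous c := by
    apply continuous_finset_sum; intro i _
    apply continuous_finset_sum; intro j _
    exact ((continuous_apply_apply i k).mul continuous_const).mul (continuous_apply_apply j l)
  set K := ∑ p : Fin N, ∑ q : Fin N, |C p q| with hKdef
  have hK : 0 ≤ K := Finset.sum_nonneg fun p _ => Finset.sum_nonneg fun q _ => abs_nonneg _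
  have hCK : ∀ i j, |C i j| ≤ K := by
    intro i j
    calc |C i j| ≤ ∑ q, |C i q| :=
          Finset.single_le_sum (f := fun q => |C i q|) (fun q _ => abs_nonneg _) (Finset.mem_univ j)
      _ ≤ K :=
          Finset.single_le_sum (f := fun p => ∑ q, |C p q|)
            (fun p _ => Finset.sum_nonneg fun q _ => abs_nonneg _) (Finset.mem_univ i)
  intro T₀ hT₀
  set F := fun T : Matrix (Fin N) (Fin n) ℝ =>
    if 0 < colSum T k * colSum T l then c T ^ 2 / (colSum T k * colSum T l) else 0 with hFdef
  show ContinuousWithinAt F S T₀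
  by_cases hab : 0 < colSum T₀ k * colSum T₀ l
  · have hopen : IsOpen {T : Matrix (Fin N) (Fin n) ℝ | 0 < colSum T k * colSum T l} :=
      isOpen_lt continuous_const ((hcol k).mul (hcol l))
    have heq : (fun T => c T ^ 2 / (colSum T k * colSum T l)) =ᶠ[nhds T₀] F := by
      filter_upwards [hopen.mem_nhds hab] with T hT
      simp only [hFdef, if_pos hT]
    have hca : ContinuousAt F T₀ := by
      refine ContinuousAt.congr ?_ heq
      exact ((hc.pow 2).continuousAt).div (((hcol k).mul (hcol l)).continuousAt) (ne_of_gt hab)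
    exact hca.continuousWithinAt
  · have hab0 : ∀ T ∈ S, 0 ≤ colSum T k * colSum T l := fun T hT =>
      mul_nonneg (Finset.sum_nonneg fun i _ => hT.1 i k)
        (Finset.sum_nonneg fun i _ => hT.1 i l)
    have hF0 : F T₀ = 0 := if_neg hab
    rw [ContinuousWithinAt, hF0]
    have htend : Filter.Tendsto (fun T => K ^ 2 * (colSum T k * colSum T l))
        (nhdsWithin T₀ S) (nhds 0) := by
      have h1 : Filter.Tendsto (fun T => K ^ 2 * (colSum T k * colSum T l))
          (nhds T₀) (nhds (K ^ 2 * (colSum T₀ k * colSum T₀ l))) :=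
        ((continuous_const.mul ((hcol k).mul (hcol l))).continuousAt)
      have habeq : colSum T₀ k * colSum T₀ l = 0 :=
        le_antisymm (not_lt.1 hab) (hab0 T₀ hT₀)
      rw [habeq, mul_zero] at h1
      exact h1.mono_left nhdsWithin_le_nhds
    refine tendsto_of_tendsto_of_tendsto_of_le_of_le' tendsto_const_nhds htend ?_ ?_
    · filter_upwards with T
      by_cases hT : 0 < colSum T k * colSum T l
      · simp only [hFdef, if_pos hT]
        exact div_nonneg (sq_nonneg _) (le_of_lt hT)
      · simp only [hFdef, if_neg hT]; exact le_refl 0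
    · filter_upwards [self_mem_nhdsWithin] with T hT
      have hTnn : ∀ i j, 0 ≤ T i j := hT.1
      have hcbound : |c T| ≤ K * (colSum T k * colSum T l) := by
        calc |c T| ≤ ∑ i, ∑ j, |T i k * C i j * T j l| := by
              refine (Finset.abs_sum_le_sum_abs _ _).trans ?_
              exact Finset.sum_le_sum fun i _ => Finset.abs_sum_le_sum_abs _ _
          _ ≤ ∑ i, ∑ j, T i k * K * T j l := by
              refine Finset.sum_le_sum fun i _ => Finset.sum_le_sum fun j _ => ?_
              rw [abs_mul, abs_mul, abs_of_nonneg (hTnn i k), abs_of_nonneg (hTnn j l)]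
              have := hCK i j
              have h2 : T i k * |C i j| ≤ T i k * K :=
                mul_le_mul_of_nonneg_left this (hTnn i k)
              exact mul_le_mul_of_nonneg_right h2 (hTnn j l)
          _ = K * (colSum T k * colSum T l) := by
              have hrhs : K * (colSum T k * colSum T l) = ∑ i, ∑ j, K * (T i k * T j l) := by
                simp only [colSum]
                rw [Finset.sum_mul_sum, Finset.mul_sum]
                exact Finset.sum_congr rfl fun i _ => Finset.mul_sum _ _ _
              rw [hrhs]
              exact Finset.sum_congr rfl fun i _ => Finset.sum_congr rfl fun j _ => by ring
      have hcsq : c T ^ 2 ≤ (K * (colSum T k * colSum T l)) ^ 2 := by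
        rw [← sq_abs]
        exact pow_le_pow_left₀ (abs_nonneg _) hcbound 2
      by_cases hTp : 0 < colSum T k * colSum T l
      · simp only [hFdef, if_pos hTp]
        rw [div_le_iff₀ hTp]
        calc c T ^ 2 ≤ (K * (colSum T k * colSum T l)) ^ 2 := hcsq
          _ = K ^ 2 * (colSum T k * colSum T l) * (colSum T k * colSum T l) := by ring
      · simp only [hFdef, if_neg hTp]
        exact mul_nonneg (sq_nonneg _) (hab0 T hT)
end

section
/- For T ∈ U_n(h) with strictly positive column sums h̄, the identity ∑_{k,l} (T_{:,k}ᵀ C T_{:,l})²/(h̄_k h̄_l) = Tr(U Cᵀ U C) holds, where U = T diag(h̄)^{-1} Tᵀ. -/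
open Matrix BigOperators

/-- For `T ∈ U_n(h)` with strictly positive column sums `h̄`, the identity
`∑_{k,l} (T_{:,k}ᵀ C T_{:,l})²/(h̄_k h̄_l) = Tr(U Cᵀ U C)` holds, where
`U = T diag(h̄)⁻¹ Tᵀ`. -/
theorem selfGluing_trace_identity {N n : ℕ}
    (C : Matrix (Fin N) (Fin N) ℝ) (h : Fin N → ℝ)
    (T : Matrix (Fin N) (Fin n) ℝ)
    (hTpos : ∀ i j, 0 ≤ T i j) (hTrow : ∀ i, ∑ j, T i j = h i)
    (hcol : ∀ k, 0 < colSum T k)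
    (U : Matrix (Fin N) (Fin N) ℝ)
    (hU : U = T * Matrix.diagonal (fun k => (colSum T k)⁻¹) * Tᵀ) :
    ∑ k, ∑ l, (∑ i, ∑ j, T i k * C i j * T j l) ^ 2 / (colSum T k * colSum T l)
      = Matrix.trace (U * Cᵀ * U * C) := by
  set D : Matrix (Fin n) (Fin n) ℝ := Matrix.diagonal (fun k => (colSum T k)⁻¹) with hD
  set M : Matrix (Fin n) (Fin n) ℝ := Tᵀ * C * T with hM
  have hMentry : ∀ k l, M k l = ∑ i, ∑ j, T i k * C i j * T j l := by
    intro k l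
    rw [hM]
    simp only [Matrix.mul_apply, Matrix.transpose_apply, Finset.sum_mul]
    rw [Finset.sum_comm]
  have key : Matrix.trace (U * Cᵀ * U * C) = Matrix.trace (M * D * Mᵀ * D) := by
    rw [hU]
    have h1 : (T * D * Tᵀ) * Cᵀ * (T * D * Tᵀ) * C
        = T * (D * (Tᵀ * Cᵀ * T) * D * (Tᵀ * C)) := by
      simp only [Matrix.mul_assoc]
    rw [h1, Matrix.trace_mul_comm]
    have h2 : D * (Tᵀ * Cᵀ * T) * D * (Tᵀ * C) * T = D * Mᵀ * (D * M) := by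
      rw [hM]
      simp only [Matrix.transpose_mul, Matrix.transpose_transpose, Matrix.mul_assoc]
    rw [h2, Matrix.trace_mul_comm]
    have h3 : D * M * (D * Mᵀ) = D * (M * D * Mᵀ) := by
      simp only [Matrix.mul_assoc]
    rw [h3, Matrix.trace_mul_comm]
  rw [key, Matrix.trace]
  have htr : ∀ k : Fin n, (M * D * Mᵀ * D) k k
      = (∑ l, M k l * (colSum T l)⁻¹ * M k l) * (colSum T k)⁻¹ := by
    intro k
    rw [show (M * D * Mᵀ * D) k k = (M * D * Mᵀ) k k * (colSum T k)⁻¹ from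
      Matrix.mul_diagonal _ _ _ _]
    congr 1
    rw [Matrix.mul_apply]
    refine Finset.sum_congr rfl fun l _ => ?_
    rw [show (M * D) k l = M k l * (colSum T l)⁻¹ from Matrix.mul_diagonal _ _ _ _,
      Matrix.transpose_apply]
  simp only [Matrix.diag_apply, htr, Finset.sum_mul]
  refine Finset.sum_congr rfl fun k _ => Finset.sum_congr rfl fun l _ => ?_
  rw [← hMentry k l]
  field_simp
end

section
/- If g(U) = vec(U)ᵀ(C ⊗ C)vec(U) is convex on U(h,h), then the function F(T) = E(C, C̄(T), T) is concave on the interior set U̇_n(h) = {T ∈ U_n(h) : Tᵀ1_N > 0 entrywise}; equivalently, f(T) = ∑_{k,l}(T_{:,k}ᵀCT_{:,l})²/(h̄_k h̄_l) is convex there. -/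
open Matrix BigOperators Kronecker

/-!
Write `h̄ = Tᵀ1` and `U(T) = T diag(h̄)⁻¹ Tᵀ`, a coupling in `U(h, h)`. Expanding the square in
`E(C, C̄(T), T)` gives `F(T) = ∑ Cᵢⱼ² hᵢ hⱼ - f(T)` with `f(T) = g(U(T))`, so it suffices to show
that `f` is convex. For `U = ∑ₖ cₖ xₖ xₖᵀ` one has `g(U) = ∑ₖₗ cₖ cₗ (xₖᵀ C xₗ)²`, so `g` can only
grow when nonnegative multiples of rank-one matrices `y yᵀ` are added to `U`. Column by column,
`a U(T₁) + b U(T₂) - U(a T₁ + b T₂)` is such a multiple, whence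
`f(a T₁ + b T₂) ≤ g(a U(T₁) + b U(T₂)) ≤ a f(T₁) + b f(T₂)` by the convexity of `g`.
-/

open Finset

theorem sum_comm_pairs {α β γ δ M : Type*} [Fintype α] [Fintype β] [Fintype γ]
    [Fintype δ] [AddCommMonoid M] (f : α → β → γ → δ → M) :
    ∑ i, ∑ j, ∑ k, ∑ l, f i j k l = ∑ k, ∑ l, ∑ i, ∑ j, f i j k l :=
  calc ∑ i, ∑ j, ∑ k, ∑ l, f i j k l = ∑ i, ∑ k, ∑ j, ∑ l, f i j k l :=
        sum_congr rfl fun _ _ => sum_comm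
    _ = ∑ k, ∑ i, ∑ j, ∑ l, f i j k l := sum_comm
    _ = ∑ k, ∑ i, ∑ l, ∑ j, f i j k l :=
        sum_congr rfl fun _ _ => sum_congr rfl fun _ _ => sum_comm
    _ = ∑ k, ∑ l, ∑ i, ∑ j, f i j k l := sum_congr rfl fun _ _ => sum_comm

section KroneckerQuadraticForm

variable {ι κ κ' : Type*} [Fintype ι] [Fintype κ] [Fintype κ'] (C : Matrix ι ι ℝ)

/-- The quadratic form `g(U) = vec(U)ᵀ (C ⊗ C) vec(U)`. -/
noncomputable def kronQuad (U : Matrix ι ι ℝ) : ℝ :=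
  ∑ p : ι × ι, ∑ q : ι × ι, U p.1 p.2 * (C ⊗ₖ C) p q * U q.1 q.2

noncomputable def rankOneSum (c : κ → ℝ) (x : κ → ι → ℝ) : Matrix ι ι ℝ :=
  ∑ k, c k • vecMulVec (x k) (x k)

omit [Fintype ι] in
theorem rankOneSum_apply (c : κ → ℝ) (x : κ → ι → ℝ) (i j : ι) :
    rankOneSum c x i j = ∑ k, c k * x k i * x k j := by
  simp only [rankOneSum, Matrix.sum_apply, Matrix.smul_apply, vecMulVec_apply, smul_eq_mul,
    mul_assoc]

omit [Fintype ι] in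
theorem rankOneSum_sumElim (c : κ → ℝ) (d : κ' → ℝ) (x : κ → ι → ℝ) (y : κ' → ι → ℝ) :
    rankOneSum (Sum.elim c d) (Sum.elim x y) = rankOneSum c x + rankOneSum d y :=
  Fintype.sum_sum_type _

theorem sq_bilin_eq_kron (x y : ι → ℝ) :
    (∑ i, ∑ j, x i * C i j * y j) ^ 2 =
      ∑ p : ι × ι, ∑ q : ι × ι, x p.1 * x p.2 * (C ⊗ₖ C) p q * (y q.1 * y q.2) := by
  simp only [sq, sum_mul, mul_sum, Fintype.sum_prod_type, kroneckerMap_apply]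
  refine sum_congr rfl fun i _ => ?_
  rw [sum_comm]
  exact sum_congr rfl fun i' _ => sum_congr rfl fun j _ => sum_congr rfl fun j' _ => by ring

theorem kronQuad_rankOneSum (c : κ → ℝ) (x : κ → ι → ℝ) :
    kronQuad C (rankOneSum c x) =
      ∑ k, ∑ l, c k * c l * (∑ i, ∑ j, x k i * C i j * x l j) ^ 2 := by
  simp only [kronQuad, rankOneSum_apply, sum_mul, mul_sum, sq_bilin_eq_kron]
  rw [sum_comm_pairs, sum_comm]
  exact sum_congr rfl fun k _ => sum_congr rfl fun l _ =>
    sum_congr rfl fun p _ => sum_congr rfl fun q _ => by ring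

theorem kronQuad_rankOneSum_le_add {c : κ → ℝ} {d : κ' → ℝ} (hc : ∀ k, 0 ≤ c k)
    (hd : ∀ k, 0 ≤ d k) (x : κ → ι → ℝ) (y : κ' → ι → ℝ) :
    kronQuad C (rankOneSum c x) ≤ kronQuad C (rankOneSum c x + rankOneSum d y) := by
  rw [← rankOneSum_sumElim, kronQuad_rankOneSum, kronQuad_rankOneSum]
  set F : κ ⊕ κ' → κ ⊕ κ' → ℝ := fun p q => Sum.elim c d p * Sum.elim c d q *
    (∑ i, ∑ j, Sum.elim x y p i * C i j * Sum.elim x y q j) ^ 2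
  have hF : ∀ p q, 0 ≤ F p q := by
    have hcd : ∀ p, 0 ≤ Sum.elim c d p := by rintro (k | k) <;> simp [hc, hd]
    exact fun p q => mul_nonneg (mul_nonneg (hcd p) (hcd q)) (sq_nonneg _)
  calc ∑ k, ∑ l, F (.inl k) (.inl l) ≤ ∑ k, ∑ q, F (.inl k) q :=
        sum_le_sum fun k _ => by
          rw [Fintype.sum_sum_type]
          exact le_add_of_nonneg_right (sum_nonneg fun l _ => hF _ _)
    _ ≤ ∑ p, ∑ q, F p q := by
        rw [Fintype.sum_sum_type (fun p => ∑ q, F p q)]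
        exact le_add_of_nonneg_right (sum_nonneg fun k _ => sum_nonneg fun l _ => hF _ _)

end KroneckerQuadraticForm

section Couplings

variable {N n : ℕ}

/-- The transport polytope `U(h, h)`. -/
def couplings (h : Fin N → ℝ) : Set (Matrix (Fin N) (Fin N) ℝ) :=
  {U | (∀ i j, 0 ≤ U i j) ∧ (∀ i, ∑ j, U i j = h i) ∧ ∀ j, ∑ i, U i j = h j}

/-- `U̇_n(h)`: semi-couplings with first marginal `h` and entrywise positive second marginal. -/
def posSemiCouplings (h : Fin N → ℝ) : Set (Matrix (Fin N) (Fin n) ℝ) :=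
  {T | (∀ i j, 0 ≤ T i j) ∧ (∀ i, ∑ j, T i j = h i) ∧ ∀ k, 0 < colSum T k}

theorem colSum_smul_add_smul (a b : ℝ) (T₁ T₂ : Matrix (Fin N) (Fin n) ℝ) (k : Fin n) :
    colSum (a • T₁ + b • T₂) k = a * colSum T₁ k + b * colSum T₂ k := by
  simp only [colSum, Matrix.add_apply, Matrix.smul_apply, smul_eq_mul, sum_add_distrib, mul_sum]

theorem convex_posSemiCouplings (h : Fin N → ℝ) : Convex ℝ (posSemiCouplings (n := n) h) := by
  rintro T₁ ⟨hnn₁, hrow₁, hcol₁⟩ T₂ ⟨hnn₂, hrow₂, hcol₂⟩ a b ha hb hab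
  refine ⟨fun i k => ?_, fun i => ?_, fun k => ?_⟩
  · have := hnn₁ i k; have := hnn₂ i k
    simp only [Matrix.add_apply, Matrix.smul_apply, smul_eq_mul]
    positivity
  · simp only [Matrix.add_apply, Matrix.smul_apply, smul_eq_mul, sum_add_distrib, ← mul_sum,
      hrow₁, hrow₂]
    rw [← add_mul, hab, one_mul]
  · rw [colSum_smul_add_smul]
    exact convex_Ioi (0 : ℝ) (hcol₁ k) (hcol₂ k) ha hb hab

/-- The coupling `T diag(Tᵀ1)⁻¹ Tᵀ` induced by a semi-coupling `T`. -/
noncomputable def coupling (T : Matrix (Fin N) (Fin n) ℝ) : Matrix (Fin N) (Fin N) ℝ :=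
  rankOneSum (fun k => (colSum T k)⁻¹) (fun k i => T i k)

noncomputable def reducedQuad (C : Matrix (Fin N) (Fin N) ℝ) (T : Matrix (Fin N) (Fin n) ℝ) :
    ℝ :=
  ∑ k, ∑ l, (∑ i, ∑ j, T i k * C i j * T j l) ^ 2 / (colSum T k * colSum T l)

theorem kronQuad_coupling (C : Matrix (Fin N) (Fin N) ℝ) (T : Matrix (Fin N) (Fin n) ℝ) :
    kronQuad C (coupling T) = reducedQuad C T := by
  rw [coupling, kronQuad_rankOneSum, reducedQuad]
  exact sum_congr rfl fun k _ => sum_congr rfl fun l _ => by ring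

theorem sum_coupling_apply {T : Matrix (Fin N) (Fin n) ℝ} (hcol : ∀ k, colSum T k ≠ 0)
    (i : Fin N) : ∑ j, coupling T i j = ∑ k, T i k := by
  simp only [coupling, rankOneSum_apply]
  rw [sum_comm]
  refine sum_congr rfl fun k _ => ?_
  rw [← mul_sum]
  change (colSum T k)⁻¹ * T i k * colSum T k = T i k
  field_simp [hcol k]

theorem coupling_apply_comm (T : Matrix (Fin N) (Fin n) ℝ) (i j : Fin N) :
    coupling T i j = coupling T j i := by
  simp only [coupling, rankOneSum_apply, mul_right_comm]

theorem coupling_mem_couplings {h : Fin N → ℝ} {T : Matrix (Fin N) (Fin n) ℝ}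
    (hT : T ∈ posSemiCouplings h) : coupling T ∈ couplings h := by
  obtain ⟨hnn, hrow, hcol⟩ := hT
  have hcol' k := (hcol k).ne'
  refine ⟨fun i j => ?_, fun i => ?_, fun j => ?_⟩
  · simp only [coupling, rankOneSum_apply]
    exact sum_nonneg fun k _ => by have := hcol k; have := hnn i k; have := hnn j k; positivity
  · rw [sum_coupling_apply hcol', hrow]
  · simp only [coupling_apply_comm T _ j]
    rw [sum_coupling_apply hcol', hrow]

/-- The defect of matrix convexity of `T ↦ coupling T` is a nonnegative combination of
rank-one matrices `y yᵀ`. -/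
theorem smul_coupling_add_smul_coupling {a b : ℝ} {T₁ T₂ : Matrix (Fin N) (Fin n) ℝ}
    (hcol₁ : ∀ k, colSum T₁ k ≠ 0) (hcol₂ : ∀ k, colSum T₂ k ≠ 0)
    (hcol : ∀ k, colSum (a • T₁ + b • T₂) k ≠ 0) :
    a • coupling T₁ + b • coupling T₂ =
      coupling (a • T₁ + b • T₂) +
        rankOneSum
          (fun k => a * b / (colSum T₁ k * colSum T₂ k * colSum (a • T₁ + b • T₂) k))
          (fun k i => colSum T₁ k * T₂ i k - colSum T₂ k * T₁ i k) := by
  ext i j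
  simp only [coupling, Matrix.add_apply, Matrix.smul_apply, smul_eq_mul, rankOneSum_apply, mul_sum,
    ← sum_add_distrib]
  refine sum_congr rfl fun k _ => ?_
  have hk := hcol k
  rw [colSum_smul_add_smul] at hk ⊢
  field_simp [hcol₁ k, hcol₂ k, hk]
  ring

end Couplings

theorem sum_sq_sub_weightedMean {ι : Type*} [Fintype ι] (C : Matrix ι ι ℝ) {u v : ι → ℝ}
    (hu : ∑ i, u i ≠ 0) (hv : ∑ j, v j ≠ 0) :
    ∑ i, ∑ j, (C i j - (∑ i, ∑ j, u i * C i j * v j) / ((∑ i, u i) * ∑ j, v j)) ^ 2 * u i * v j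
      = ∑ i, ∑ j, C i j ^ 2 * u i * v j
        - (∑ i, ∑ j, u i * C i j * v j) ^ 2 / ((∑ i, u i) * ∑ j, v j) := by
  set M := ∑ i, ∑ j, u i * C i j * v j
  set d := M / ((∑ i, u i) * ∑ j, v j)
  have hexpand : ∑ i, ∑ j, (C i j - d) ^ 2 * u i * v j
      = ∑ i, ∑ j, C i j ^ 2 * u i * v j - 2 * d * M + d ^ 2 * ((∑ i, u i) * ∑ j, v j) := by
    rw [sum_mul_sum]
    simp only [M, mul_sum, ← sum_sub_distrib, ← sum_add_distrib]
    exact sum_congr rfl fun i _ => sum_congr rfl fun j _ => by ring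
  rw [hexpand]
  simp only [d]
  field_simp
  ring

theorem GWEnergy_CbarOf_eq {N n : ℕ} (C : Matrix (Fin N) (Fin N) ℝ) {h : Fin N → ℝ}
    {T : Matrix (Fin N) (Fin n) ℝ} (hrow : ∀ i, ∑ k, T i k = h i)
    (hcol : ∀ k, 0 < colSum T k) :
    GWEnergy C (CbarOf C T) T = ∑ i, ∑ j, C i j ^ 2 * h i * h j - reducedQuad C T := by
  have hblock k l : ∑ i, ∑ j, (C i j - CbarOf C T k l) ^ 2 * T i k * T j l
      = ∑ i, ∑ j, C i j ^ 2 * T i k * T j l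
        - (∑ i, ∑ j, T i k * C i j * T j l) ^ 2 / (colSum T k * colSum T l) := by
    have hCbar : CbarOf C T k l
        = (∑ i, ∑ j, T i k * C i j * T j l) / (colSum T k * colSum T l) :=
      if_pos (mul_pos (hcol k) (hcol l))
    rw [hCbar]
    exact sum_sq_sub_weightedMean C (hcol k).ne' (hcol l).ne'
  have hconst i j : ∑ k, ∑ l, C i j ^ 2 * T i k * T j l = C i j ^ 2 * h i * h j := by
    rw [← hrow, ← hrow, mul_assoc, sum_mul_sum, mul_sum]
    exact sum_congr rfl fun k _ => by simp only [mul_sum, mul_assoc]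
  rw [GWEnergy, sum_comm_pairs]
  simp only [hblock, sum_sub_distrib, reducedQuad]
  rw [← sum_comm_pairs]
  simp only [hconst]

theorem reducedQuad_convexOn {N n : ℕ} {C : Matrix (Fin N) (Fin N) ℝ} {h : Fin N → ℝ}
    (hconv : ConvexOn ℝ (couplings h) (kronQuad C)) :
    ConvexOn ℝ (posSemiCouplings (n := n) h) (reducedQuad C) := by
  refine ⟨convex_posSemiCouplings h, fun T₁ hT₁ T₂ hT₂ a b ha hb hab => ?_⟩
  have hcol₁ := hT₁.2.2
  have hcol₂ := hT₂.2.2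
  have hcol := (convex_posSemiCouplings h hT₁ hT₂ ha hb hab).2.2
  have hdefect k :
      0 ≤ a * b / (colSum T₁ k * colSum T₂ k * colSum (a • T₁ + b • T₂) k) := by
    have := hcol₁ k; have := hcol₂ k; have := hcol k
    positivity
  calc reducedQuad C (a • T₁ + b • T₂) = kronQuad C (coupling (a • T₁ + b • T₂)) :=
        (kronQuad_coupling C _).symm
    _ ≤ kronQuad C (a • coupling T₁ + b • coupling T₂) := by
        rw [smul_coupling_add_smul_coupling (fun k => (hcol₁ k).ne') (fun k => (hcol₂ k).ne')
          (fun k => (hcol k).ne')]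
        exact kronQuad_rankOneSum_le_add C (fun k => (inv_pos.2 (hcol k)).le) hdefect _ _
    _ ≤ a • kronQuad C (coupling T₁) + b • kronQuad C (coupling T₂) :=
        hconv.2 (coupling_mem_couplings hT₁) (coupling_mem_couplings hT₂) ha hb hab
    _ = a • reducedQuad C T₁ + b • reducedQuad C T₂ := by
        rw [kronQuad_coupling, kronQuad_coupling]

theorem reduced_energy_concaveOn_interior_general {N n : ℕ}
    (C : Matrix (Fin N) (Fin N) ℝ) (h : Fin N → ℝ)
    (hconv : ConvexOn ℝ
      {U : Matrix (Fin N) (Fin N) ℝ |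
        (∀ i j, 0 ≤ U i j) ∧ (∀ i, ∑ j, U i j = h i) ∧ ∀ j, ∑ i, U i j = h j}
      (fun U => ∑ p : Fin N × Fin N, ∑ q : Fin N × Fin N,
        U p.1 p.2 * (C ⊗ₖ C) p q * U q.1 q.2)) :
    ConcaveOn ℝ
      {T : Matrix (Fin N) (Fin n) ℝ |
        (∀ i j, 0 ≤ T i j) ∧ (∀ i, ∑ j, T i j = h i) ∧ ∀ k, 0 < colSum T k}
      (fun T => GWEnergy C (CbarOf C T) T) := by
  have hf : ConvexOn ℝ (posSemiCouplings (n := n) h) (reducedQuad C) := reducedQuad_convexOn hconv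
  refine ((concaveOn_const (∑ i, ∑ j, C i j ^ 2 * h i * h j) hf.1).sub hf).congr ?_
  rintro T ⟨-, hrow, hcol⟩
  exact (GWEnergy_CbarOf_eq C hrow hcol).symm

/-- If `g(U) = vec(U)ᵀ(C ⊗ C)vec(U)` is convex on `U(h,h)`, then
`F(T) = E(C, C̄(T), T)` is concave on `U̇_n(h) = {T ∈ U_n(h) : Tᵀ1 > 0 entrywise}`. -/
theorem reduced_energy_concaveOn_interior {N n : ℕ}
    (C : Matrix (Fin N) (Fin N) ℝ) (h : Fin N → ℝ)
    (hpos : ∀ i, 0 < h i) (hsum : ∑ i, h i = 1)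
    (hconv : ConvexOn ℝ
      {U : Matrix (Fin N) (Fin N) ℝ |
        (∀ i j, 0 ≤ U i j) ∧ (∀ i, ∑ j, U i j = h i) ∧ ∀ j, ∑ i, U i j = h j}
      (fun U => ∑ p : Fin N × Fin N, ∑ q : Fin N × Fin N,
        U p.1 p.2 * (C ⊗ₖ C) p q * U q.1 q.2)) :
    ConcaveOn ℝ
      {T : Matrix (Fin N) (Fin n) ℝ |
        (∀ i j, 0 ≤ T i j) ∧ (∀ i, ∑ j, T i j = h i) ∧ ∀ k, 0 < colSum T k}
      (fun T => GWEnergy C (CbarOf C T) T) :=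
  reduced_energy_concaveOn_interior_general C h hconv
end

section
/- If g(U) = vec(U)ᵀ(C ⊗ C)vec(U) is convex on U(h,h), then the semi-relaxed GW barycenter problem min_{C̄ ∈ R^{n×n}} min_{T ∈ U_n(h)} ∑_{ijkl}(C_{ij}−C̄_{kl})² T_{ik}T_{jl} admits an optimal transport plan that is a scaled membership matrix, i.e., of the form diag(h)·M with M ∈ {0,1}^{N×n} having exactly one 1 per row. -/
open Matrix BigOperators Kronecker

/-!
For a plan `T` with column masses `a = Tᵀ1` and `S = TᵀCT`, the energy is a quadratic in `C̄`,
minimised at `C̄ = S / (a aᵀ)` with minimum `∑ C_ij² h_i h_j - Φ(T)`, where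
`Φ(T) = ∑ S_kl² / (a_k a_l) = g(U(T))` for the coupling `U(T) = T diag(a)⁻¹ Tᵀ ∈ U(h,h)`.
So it suffices to maximise `Φ` over `U_n(h)`.

`Φ` is convex on `U_n(h)`: the matrix perspective `(c, x) ↦ x xᵀ / c` is jointly convex with a
rank-one defect, so `a U(T) + b U(T') = U(a T + b T') + Δ` with `Δ` in the cone spanned by the
`x xᵀ`; and `g(X + Δ) ≥ g(X)` for `X, Δ` in that cone because `vec(x xᵀ)ᵀ (C ⊗ C) vec(y yᵀ) =
(xᵀ C y)²`. Together with the convexity of `g` this gives `Φ(aT + bT') ≤ a Φ(T) + b Φ(T')`.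
Finally `U_n(h)` is the convex hull of the scaled membership matrices (weight the assignment `σ`
by `∏ᵢ T_{iσ(i)} / h_i`), so by the maximum principle `Φ` is maximised at one of them.
-/

open Finset

noncomputable section

namespace SemiRelaxedGW

variable {ι κ : Type*}

def kronForm [Fintype ι] (C : Matrix ι ι ℝ) : LinearMap.BilinForm ℝ (Matrix ι ι ℝ) :=
  LinearMap.mk₂ ℝ (fun X Y => ∑ p : ι × ι, ∑ q : ι × ι, X p.1 p.2 * (C ⊗ₖ C) p q * Y q.1 q.2)
    (fun _ _ _ => by simp only [Matrix.add_apply, add_mul, sum_add_distrib])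
    (fun _ _ _ => by simp only [Matrix.smul_apply, smul_eq_mul, mul_assoc, mul_sum])
    (fun _ _ _ => by simp only [Matrix.add_apply, mul_add, sum_add_distrib])
    (fun _ _ _ => by
      simp only [Matrix.smul_apply, smul_eq_mul, mul_sum]
      exact sum_congr rfl fun _ _ => sum_congr rfl fun _ _ => by ring)

abbrev rankOneHull (ι : Type*) : PointedCone ℝ (Matrix ι ι ℝ) :=
  PointedCone.hull ℝ (Set.range fun x : ι → ℝ => vecMulVec x x)

section KronForm

variable [Fintype ι] (C : Matrix ι ι ℝ)

theorem kronForm_vecMulVec (x y : ι → ℝ) :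
    kronForm C (vecMulVec x x) (vecMulVec y y) = (x ⬝ᵥ C *ᵥ y) ^ 2 := by
  simp only [dotProduct, mulVec, mul_sum]
  rw [sq, sum_mul_sum]
  simp only [sum_mul_sum]
  simp only [kronForm, LinearMap.mk₂_apply, vecMulVec_apply, kroneckerMap_apply,
    Fintype.sum_prod_type]
  refine sum_congr rfl fun a _ => sum_congr rfl fun b _ => ?_
  refine sum_congr rfl fun c _ => sum_congr rfl fun d _ => by ring

theorem kronForm_nonneg {X Y : Matrix ι ι ℝ} (hX : X ∈ rankOneHull ι) (hY : Y ∈ rankOneHull ι) :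
    0 ≤ kronForm C X Y := by
  induction hX using Submodule.span_induction with
  | mem X hX =>
    obtain ⟨x, rfl⟩ := hX
    induction hY using Submodule.span_induction with
    | mem Y hY =>
      obtain ⟨y, rfl⟩ := hY
      exact kronForm_vecMulVec C x y ▸ sq_nonneg _
    | zero => simp
    | add _ _ _ _ h₁ h₂ => simpa using add_nonneg h₁ h₂
    | smul c _ _ h =>
      rw [← Nonneg.coe_smul, map_smul, smul_eq_mul]
      exact mul_nonneg c.2 h
  | zero => simp
  | add _ _ _ _ h₁ h₂ => simpa using add_nonneg h₁ h₂
  | smul c _ _ h =>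
    rw [← Nonneg.coe_smul, map_smul, LinearMap.smul_apply, smul_eq_mul]
    exact mul_nonneg c.2 h

theorem kronForm_le_kronForm_add {X Δ : Matrix ι ι ℝ} (hX : X ∈ rankOneHull ι)
    (hΔ : Δ ∈ rankOneHull ι) : kronForm C X X ≤ kronForm C (X + Δ) (X + Δ) := by
  have := kronForm_nonneg C hX hΔ
  have := kronForm_nonneg C hΔ hX
  have := kronForm_nonneg C hΔ hΔ
  simp only [map_add, LinearMap.add_apply]
  linarith

end KronForm

def semiCouplings [Fintype κ] (h : ι → ℝ) : Set (Matrix ι κ ℝ) :=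
  {T | (∀ i k, 0 ≤ T i k) ∧ ∀ i, ∑ k, T i k = h i}

def couplings [Fintype ι] (h : ι → ℝ) : Set (Matrix ι ι ℝ) :=
  {U | (∀ i j, 0 ≤ U i j) ∧ (∀ i, ∑ j, U i j = h i) ∧ ∀ j, ∑ i, U i j = h j}

theorem convex_semiCouplings [Fintype κ] (h : ι → ℝ) :
    Convex ℝ (semiCouplings (κ := κ) h) := by
  rintro T ⟨hT₀, hT₁⟩ T' ⟨hT'₀, hT'₁⟩ a b ha hb hab
  refine ⟨fun i k => ?_, fun i => ?_⟩
  · simp only [Matrix.add_apply, Matrix.smul_apply, smul_eq_mul]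
    exact add_nonneg (mul_nonneg ha (hT₀ i k)) (mul_nonneg hb (hT'₀ i k))
  · simp only [Matrix.add_apply, Matrix.smul_apply, smul_eq_mul, sum_add_distrib, ← mul_sum,
      hT₁, hT'₁, ← add_mul, hab, one_mul]

section ColSum

variable [Fintype ι]

def colSum (T : Matrix ι κ ℝ) (k : κ) : ℝ := ∑ i, T i k

theorem colSum_nonneg {T : Matrix ι κ ℝ} (hT : ∀ i k, 0 ≤ T i k) (k : κ) : 0 ≤ colSum T k :=
  sum_nonneg fun i _ => hT i k

theorem col_eq_zero_of_colSum_eq_zero {T : Matrix ι κ ℝ} (hT : ∀ i k, 0 ≤ T i k) {k : κ}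
    (hk : colSum T k = 0) : Tᵀ k = 0 :=
  funext fun i => (sum_eq_zero_iff_of_nonneg fun i _ => hT i k).1 hk i (mem_univ i)

theorem dotProduct_mulVec_eq_zero_of_colSum_mul_eq_zero (C : Matrix ι ι ℝ)
    {T : Matrix ι κ ℝ} (hT : ∀ i k, 0 ≤ T i k) {k l : κ}
    (hkl : colSum T k * colSum T l = 0) : Tᵀ k ⬝ᵥ C *ᵥ Tᵀ l = 0 := by
  rcases mul_eq_zero.1 hkl with h0 | h0 <;> simp [col_eq_zero_of_colSum_eq_zero hT h0]

theorem colSum_add_smul (a b : ℝ) (T T' : Matrix ι κ ℝ) (k : κ) :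
    colSum (a • T + b • T') k = a * colSum T k + b * colSum T' k := by
  simp only [colSum, Matrix.add_apply, Matrix.smul_apply, smul_eq_mul, sum_add_distrib, mul_sum]

end ColSum

/-- At `c = 0` this is `0` (as `0⁻¹ = 0`), so columns of zero mass contribute nothing. -/
def perspective (c : ℝ) (x : ι → ℝ) : Matrix ι ι ℝ := c⁻¹ • vecMulVec x x

theorem perspective_mem_rankOneHull {c : ℝ} (hc : 0 ≤ c) (x : ι → ℝ) :
    perspective c x ∈ rankOneHull ι :=
  PointedCone.smul_mem _ (inv_nonneg.2 hc) (PointedCone.subset_hull ⟨x, rfl⟩)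

theorem perspective_defect {c c' a b : ℝ} {x y : ι → ℝ} (hc : 0 ≤ c) (hc' : 0 ≤ c')
    (hx : c = 0 → x = 0) (hy : c' = 0 → y = 0) (ha : 0 < a) (hb : 0 < b) :
    a • perspective c x + b • perspective c' y - perspective (a * c + b * c') (a • x + b • y)
      = (a * b / (c * c' * (a * c + b * c'))) • vecMulVec (c' • x - c • y) (c' • x - c • y) := by
  ext i j
  simp only [perspective, Matrix.sub_apply, Matrix.add_apply, Matrix.smul_apply, vecMulVec_apply,
    Pi.add_apply, Pi.sub_apply, Pi.smul_apply, smul_eq_mul]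
  rcases hc.eq_or_lt with rfl | hc
  · simp only [hx rfl, Pi.zero_apply]
    rcases hc'.eq_or_lt with rfl | hc'
    · simp [hy rfl]
    · field_simp
      ring
  rcases hc'.eq_or_lt with rfl | hc'
  · simp only [hy rfl, Pi.zero_apply]
    field_simp
    ring
  have : 0 < a * c + b * c' := by positivity
  field_simp
  ring

section InducedCoupling

variable [Fintype ι] [Fintype κ]

/-- `U(T) = T diag(Tᵀ1)⁻¹ Tᵀ`. -/
def inducedCoupling (T : Matrix ι κ ℝ) : Matrix ι ι ℝ := ∑ k, perspective (colSum T k) (Tᵀ k)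

theorem inducedCoupling_apply (T : Matrix ι κ ℝ) (i j : ι) :
    inducedCoupling T i j = ∑ k, (colSum T k)⁻¹ * (T i k * T j k) := by
  simp [inducedCoupling, perspective, Matrix.sum_apply, vecMulVec_apply]

theorem inducedCoupling_transpose (T : Matrix ι κ ℝ) :
    (inducedCoupling T)ᵀ = inducedCoupling T := by
  simp [inducedCoupling, perspective, transpose_sum, transpose_smul, transpose_vecMulVec]

theorem inducedCoupling_mem_rankOneHull {T : Matrix ι κ ℝ} (hT : ∀ i k, 0 ≤ T i k) :
    inducedCoupling T ∈ rankOneHull ι :=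
  Submodule.sum_mem _ fun k _ => perspective_mem_rankOneHull (colSum_nonneg hT k) _

theorem sum_inducedCoupling_apply {T : Matrix ι κ ℝ} (hT : ∀ i k, 0 ≤ T i k) (i : ι) :
    ∑ j, inducedCoupling T i j = ∑ k, T i k := by
  simp only [inducedCoupling_apply]
  rw [sum_comm]
  refine sum_congr rfl fun k _ => ?_
  rw [← mul_sum, ← mul_sum]
  change _ * (_ * colSum T k) = _
  rcases (colSum_nonneg hT k).eq_or_lt with h0 | hpos
  · rw [← h0, mul_zero, mul_zero]
    exact (congrFun (col_eq_zero_of_colSum_eq_zero hT h0.symm) i).symm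
  · field_simp

theorem inducedCoupling_mem_couplings {h : ι → ℝ} {T : Matrix ι κ ℝ}
    (hT : T ∈ semiCouplings h) : inducedCoupling T ∈ couplings h := by
  obtain ⟨hT₀, hT₁⟩ := hT
  refine ⟨fun i j => ?_, fun i => ?_, fun j => ?_⟩
  · rw [inducedCoupling_apply]
    exact sum_nonneg fun k _ =>
      mul_nonneg (inv_nonneg.2 (colSum_nonneg hT₀ k)) (mul_nonneg (hT₀ i k) (hT₀ j k))
  · rw [sum_inducedCoupling_apply hT₀, hT₁]
  · calc ∑ i, inducedCoupling T i j = ∑ i, (inducedCoupling T)ᵀ j i := rfl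
      _ = h j := by rw [inducedCoupling_transpose, sum_inducedCoupling_apply hT₀, hT₁]

theorem inducedCoupling_defect_mem_rankOneHull {T T' : Matrix ι κ ℝ} (hT : ∀ i k, 0 ≤ T i k)
    (hT' : ∀ i k, 0 ≤ T' i k) {a b : ℝ} (ha : 0 < a) (hb : 0 < b) :
    a • inducedCoupling T + b • inducedCoupling T' - inducedCoupling (a • T + b • T')
      ∈ rankOneHull ι := by
  simp only [inducedCoupling, smul_sum, ← sum_add_distrib, ← sum_sub_distrib, colSum_add_smul,
    transpose_add, transpose_smul]
  refine Submodule.sum_mem _ fun k _ => ?_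
  rw [show (a • Tᵀ + b • T'ᵀ) k = a • Tᵀ k + b • T'ᵀ k from rfl,
    perspective_defect (colSum_nonneg hT k) (colSum_nonneg hT' k)
      (col_eq_zero_of_colSum_eq_zero hT) (col_eq_zero_of_colSum_eq_zero hT') ha hb]
  have := colSum_nonneg hT k
  have := colSum_nonneg hT' k
  exact PointedCone.smul_mem _ (by positivity) (PointedCone.subset_hull ⟨_, rfl⟩)

def phi (C : Matrix ι ι ℝ) (T : Matrix ι κ ℝ) : ℝ :=
  kronForm C (inducedCoupling T) (inducedCoupling T)

theorem phi_convexOn {C : Matrix ι ι ℝ} {h : ι → ℝ}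
    (hconv : ConvexOn ℝ (couplings h) fun U => kronForm C U U) :
    ConvexOn ℝ (semiCouplings (κ := κ) h) (phi C) := by
  rw [convexOn_iff_forall_pos]
  refine ⟨convex_semiCouplings h, fun T hT T' hT' a b ha hb hab => ?_⟩
  have hmix := convex_semiCouplings h hT hT' ha.le hb.le hab
  set Δ := a • inducedCoupling T + b • inducedCoupling T' - inducedCoupling (a • T + b • T')
  calc phi C (a • T + b • T')
      ≤ kronForm C (inducedCoupling (a • T + b • T') + Δ) (inducedCoupling (a • T + b • T') + Δ) :=
        kronForm_le_kronForm_add C (inducedCoupling_mem_rankOneHull hmix.1)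
          (inducedCoupling_defect_mem_rankOneHull hT.1 hT'.1 ha hb)
    _ = kronForm C (a • inducedCoupling T + b • inducedCoupling T')
          (a • inducedCoupling T + b • inducedCoupling T') := by rw [add_sub_cancel]
    _ ≤ a • phi C T + b • phi C T' :=
        hconv.2 (inducedCoupling_mem_couplings hT) (inducedCoupling_mem_couplings hT')
          ha.le hb.le hab

theorem phi_eq_sum (C : Matrix ι ι ℝ) (T : Matrix ι κ ℝ) :
    phi C T = ∑ k, ∑ l, (Tᵀ k ⬝ᵥ C *ᵥ Tᵀ l) ^ 2 / (colSum T k * colSum T l) := by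
  simp only [phi, inducedCoupling, perspective, map_sum, LinearMap.sum_apply, map_smul,
    LinearMap.smul_apply, smul_eq_mul, kronForm_vecMulVec, mul_sum]
  rw [sum_comm]
  refine sum_congr rfl fun k _ => sum_congr rfl fun l _ => ?_
  rw [div_eq_mul_inv, mul_inv]
  ring

def optBarycenter (C : Matrix ι ι ℝ) (T : Matrix ι κ ℝ) : Matrix κ κ ℝ :=
  of fun k l => (Tᵀ k ⬝ᵥ C *ᵥ Tᵀ l) / (colSum T k * colSum T l)

end InducedCoupling

theorem sum_sum_sum_sum_comm {α β γ δ : Type*} [Fintype α] [Fintype β] [Fintype γ] [Fintype δ]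
    (f : α → β → γ → δ → ℝ) :
    ∑ a, ∑ b, ∑ c, ∑ d, f a b c d = ∑ c, ∑ d, ∑ a, ∑ b, f a b c d :=
  calc ∑ a, ∑ b, ∑ c, ∑ d, f a b c d = ∑ a, ∑ c, ∑ b, ∑ d, f a b c d :=
        sum_congr rfl fun _ _ => sum_comm
    _ = ∑ c, ∑ a, ∑ b, ∑ d, f a b c d := sum_comm
    _ = ∑ c, ∑ a, ∑ d, ∑ b, f a b c d :=
        sum_congr rfl fun _ _ => sum_congr rfl fun _ _ => sum_comm
    _ = ∑ c, ∑ d, ∑ a, ∑ b, f a b c d := sum_congr rfl fun _ _ => sum_comm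

theorem neg_sq_div_le_sq_mul_sub {a s : ℝ} (ha : 0 ≤ a) (hs : a = 0 → s = 0) (d : ℝ) :
    -(s ^ 2 / a) ≤ d ^ 2 * a - 2 * (d * s) := by
  rcases ha.eq_or_lt with rfl | ha
  · simp [hs rfl]
  have : 0 ≤ (a * d - s) ^ 2 / a := by positivity
  have key : (a * d - s) ^ 2 / a = d ^ 2 * a - 2 * (d * s) + s ^ 2 / a := by
    field_simp
    ring
  linarith

theorem div_sq_mul_sub_two_mul (s a : ℝ) : (s / a) ^ 2 * a - 2 * (s / a * s) = -(s ^ 2 / a) := by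
  rcases eq_or_ne a 0 with rfl | ha
  · simp
  field_simp
  ring

section Energy

variable {N n : ℕ} {C : Matrix (Fin N) (Fin N) ℝ} {h : Fin N → ℝ} {T : Matrix (Fin N) (Fin n) ℝ}

theorem gwEnergy_eq (hT : T ∈ semiCouplings h) (D : Matrix (Fin n) (Fin n) ℝ) :
    GWEnergy C D T = ∑ i, ∑ j, C i j ^ 2 * (h i * h j) + ∑ k, ∑ l,
      (D k l ^ 2 * (colSum T k * colSum T l) - 2 * (D k l * (Tᵀ k ⬝ᵥ C *ᵥ Tᵀ l))) := by
  have expand : ∀ i j k l, (C i j - D k l) ^ 2 * T i k * T j l = C i j ^ 2 * (T i k * T j l)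
      + (D k l ^ 2 * (T i k * T j l) - 2 * (D k l * (T i k * C i j * T j l))) := by
    intros; ring
  simp only [GWEnergy, expand, sum_add_distrib]
  congr 1
  · refine sum_congr rfl fun i _ => sum_congr rfl fun j _ => ?_
    rw [← hT.2 i, ← hT.2 j, sum_mul_sum, mul_sum]
    simp only [mul_sum]
  · rw [sum_sum_sum_sum_comm]
    refine sum_congr rfl fun k _ => sum_congr rfl fun l _ => ?_
    simp only [sum_sub_distrib]
    congr 1
    · rw [colSum, colSum, sum_mul_sum, mul_sum]
      simp only [mul_sum]
    · simp only [dotProduct, mulVec, transpose_apply, mul_sum]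
      exact sum_congr rfl fun _ _ => sum_congr rfl fun _ _ => by ring

theorem sub_phi_le_gwEnergy (hT : T ∈ semiCouplings h) (D : Matrix (Fin n) (Fin n) ℝ) :
    ∑ i, ∑ j, C i j ^ 2 * (h i * h j) - phi C T ≤ GWEnergy C D T := by
  rw [gwEnergy_eq hT, phi_eq_sum, sub_eq_add_neg, ← sum_neg_distrib]
  refine add_le_add le_rfl (sum_le_sum fun k _ => ?_)
  rw [← sum_neg_distrib]
  exact sum_le_sum fun l _ => neg_sq_div_le_sq_mul_sub
    (mul_nonneg (colSum_nonneg hT.1 k) (colSum_nonneg hT.1 l))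
    (dotProduct_mulVec_eq_zero_of_colSum_mul_eq_zero C hT.1) _

theorem gwEnergy_optBarycenter (hT : T ∈ semiCouplings h) :
    GWEnergy C (optBarycenter C T) T = ∑ i, ∑ j, C i j ^ 2 * (h i * h j) - phi C T := by
  rw [gwEnergy_eq hT, phi_eq_sum]
  simp only [optBarycenter, of_apply, div_sq_mul_sub_two_mul, sum_neg_distrib]
  ring

end Energy

section Membership

variable [Fintype κ] [DecidableEq κ]

def membershipPlan (h : ι → ℝ) (σ : ι → κ) : Matrix ι κ ℝ :=
  of fun i k => if σ i = k then h i else 0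

theorem membershipPlan_mem_semiCouplings {h : ι → ℝ} (hh : ∀ i, 0 ≤ h i) (σ : ι → κ) :
    membershipPlan h σ ∈ semiCouplings h :=
  ⟨fun i k => by simp only [membershipPlan, of_apply]; split_ifs; exacts [hh i, le_rfl],
    fun i => by simp [membershipPlan]⟩

theorem sum_ite_apply_eq_prod [Fintype ι] [DecidableEq ι] {p : ι → κ → ℝ} (hp : ∀ j, ∑ k, p j k = 1)
    (i : ι) (k : κ) : ∑ σ : ι → κ, (if σ i = k then ∏ j, p j (σ j) else 0) = p i k := by
  let f : ι → κ → ℝ := fun j k' => if j = i then (if k' = k then p i k else 0) else p j k'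
  have hf : ∀ σ : ι → κ, ∏ j, f j (σ j) = if σ i = k then ∏ j, p j (σ j) else 0 := by
    intro σ
    split_ifs with hσ
    · refine prod_congr rfl fun j _ => ?_
      by_cases hj : j = i
      · subst hj; simp [f, hσ]
      · simp [f, hj]
    · exact prod_eq_zero (mem_univ i) (by simp [f, hσ])
  have hsum : ∀ j, ∑ k', f j k' = if j = i then p i k else 1 := by
    intro j
    by_cases hj : j = i <;> simp [f, hj, hp]
  simp only [← hf, ← Fintype.prod_sum, hsum, prod_ite_eq', mem_univ, if_true]

theorem mem_convexHull_membershipPlan [Fintype ι] [DecidableEq ι] {h : ι → ℝ} (hh : ∀ i, h i ≠ 0)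
    {T : Matrix ι κ ℝ} (hT : T ∈ semiCouplings h) :
    T ∈ convexHull ℝ (Set.range (membershipPlan h)) := by
  set p : ι → κ → ℝ := fun i k => T i k / h i
  have hp : ∀ i, ∑ k, p i k = 1 := fun i => by rw [← sum_div, hT.2 i, div_self (hh i)]
  have hT_eq : T = ∑ σ : ι → κ, (∏ i, p i (σ i)) • membershipPlan h σ := by
    ext i k
    simp only [Matrix.sum_apply, Matrix.smul_apply, membershipPlan, of_apply, smul_eq_mul,
      mul_ite, mul_zero, ← ite_zero_mul, ← sum_mul, sum_ite_apply_eq_prod hp i k]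
    exact (div_mul_cancel₀ _ (hh i)).symm
  rw [hT_eq]
  refine (convex_convexHull ℝ _).sum_mem (fun σ _ => prod_nonneg fun i _ => ?_) ?_
    (fun σ _ => subset_convexHull ℝ _ ⟨σ, rfl⟩)
  · exact div_nonneg (hT.1 i (σ i)) (hT.2 i ▸ sum_nonneg fun k _ => hT.1 i k)
  · rw [← Fintype.prod_sum]
    simp [hp]

theorem exists_phi_le_phi_membershipPlan [Fintype ι] [DecidableEq ι] {C : Matrix ι ι ℝ} {h : ι → ℝ}
    (hpos : ∀ i, 0 < h i) (hconv : ConvexOn ℝ (couplings h) fun U => kronForm C U U)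
    {T : Matrix ι κ ℝ} (hT : T ∈ semiCouplings h) :
    ∃ σ : ι → κ, phi C T ≤ phi C (membershipPlan h σ) := by
  obtain ⟨_, ⟨σ, rfl⟩, hσ⟩ := (phi_convexOn hconv).exists_ge_of_mem_convexHull
    (Set.range_subset_iff.2 (membershipPlan_mem_semiCouplings fun i => (hpos i).le))
    (mem_convexHull_membershipPlan (fun i => (hpos i).ne') hT)
  exact ⟨σ, hσ⟩

end Membership

end SemiRelaxedGW

end

open SemiRelaxedGW

theorem srGW_barycenter_admits_membership_optimum_general {N n : ℕ}
    (hn : 1 ≤ n)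
    (C : Matrix (Fin N) (Fin N) ℝ) (h : Fin N → ℝ)
    (hpos : ∀ i, 0 < h i)
    (hconv : ConvexOn ℝ
      {U : Matrix (Fin N) (Fin N) ℝ |
        (∀ i j, 0 ≤ U i j) ∧ (∀ i, ∑ j, U i j = h i) ∧ ∀ j, ∑ i, U i j = h j}
      (fun U => ∑ p : Fin N × Fin N, ∑ q : Fin N × Fin N,
        U p.1 p.2 * (C ⊗ₖ C) p q * U q.1 q.2)) :
    ∃ M : Matrix (Fin N) (Fin n) ℝ,
      (∀ i j, M i j = 0 ∨ M i j = 1) ∧ (∀ i, ∃! j, M i j = 1) ∧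
      ∃ Dstar : Matrix (Fin n) (Fin n) ℝ,
        ∀ D : Matrix (Fin n) (Fin n) ℝ, ∀ T : Matrix (Fin N) (Fin n) ℝ,
          ((∀ i j, 0 ≤ T i j) ∧ ∀ i, ∑ j, T i j = h i) →
          GWEnergy C Dstar (Matrix.of fun i j => h i * M i j) ≤ GWEnergy C D T := by
  have : Nonempty (Fin n) := ⟨⟨0, hn⟩⟩
  obtain ⟨σ, -, hσ⟩ := exists_max_image univ
    (fun σ : Fin N → Fin n => phi C (membershipPlan h σ)) univ_nonempty
  have hplan : (of fun i j => h i * membershipPlan 1 σ i j) = membershipPlan h σ := by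
    ext i j
    simp [membershipPlan]
  refine ⟨membershipPlan 1 σ, fun i j => ?_, fun i => ⟨σ i, by simp [membershipPlan], ?_⟩,
    optBarycenter C (membershipPlan h σ), fun D T hT => ?_⟩
  · by_cases hij : σ i = j <;> simp [membershipPlan, hij]
  · intro j hj
    by_contra hne
    simp [membershipPlan, Ne.symm hne] at hj
  · obtain ⟨σ', hσ'⟩ := exists_phi_le_phi_membershipPlan hpos hconv hT
    rw [hplan, gwEnergy_optBarycenter (membershipPlan_mem_semiCouplings (fun i => (hpos i).le) σ)]
    linarith [sub_phi_le_gwEnergy (C := C) hT D, hσ σ' (mem_univ _)]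

/-- Theorem 1: if `g(U) = vec(U)ᵀ(C ⊗ C)vec(U)` is convex on `U(h,h)`, then the
semi-relaxed GW barycenter problem `min_{C̄} min_{T ∈ U_n(h)} E(C, C̄, T)` admits
an optimal transport plan that is a scaled membership matrix `diag(h)·M`. -/
theorem srGW_barycenter_admits_membership_optimum {N n : ℕ}
    (hN : 1 ≤ N) (hn : 1 ≤ n)
    (C : Matrix (Fin N) (Fin N) ℝ) (h : Fin N → ℝ)
    (hpos : ∀ i, 0 < h i) (hsum : ∑ i, h i = 1)
    (hconv : ConvexOn ℝ
      {U : Matrix (Fin N) (Fin N) ℝ |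
        (∀ i j, 0 ≤ U i j) ∧ (∀ i, ∑ j, U i j = h i) ∧ ∀ j, ∑ i, U i j = h j}
      (fun U => ∑ p : Fin N × Fin N, ∑ q : Fin N × Fin N,
        U p.1 p.2 * (C ⊗ₖ C) p q * U q.1 q.2)) :
    ∃ M : Matrix (Fin N) (Fin n) ℝ,
      (∀ i j, M i j = 0 ∨ M i j = 1) ∧ (∀ i, ∃! j, M i j = 1) ∧
      ∃ Dstar : Matrix (Fin n) (Fin n) ℝ,
        ∀ D : Matrix (Fin n) (Fin n) ℝ, ∀ T : Matrix (Fin N) (Fin n) ℝ,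
          ((∀ i j, 0 ≤ T i j) ∧ ∀ i, ∑ j, T i j = h i) →
          GWEnergy C Dstar (Matrix.of fun i j => h i * M i j) ≤ GWEnergy C D T :=
  srGW_barycenter_admits_membership_optimum_general hn C h hpos hconv
end
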